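/- arXiv:1910.08855 — 2 statements merged into one kernel-verified Lean document; each statement's English description precedes it below -/
import Mathlib

section
/- For all n ≥ 2 and 2 ≤ k ≤ n, the FiboNarayana numbers satisfy the recurrence (1/F_n) · binom(n,k)_F · binom(n,k-1)_F = (binom(n-1,k-1)_F)^2 + binom(n-1,k)_F · binom(n-1,k-2)_F, where both sides are equalities of rational numbers. -/
/-- The Fibonacci factorial `F_n! = F_n · F_{n-1} · ⋯ · F_1`, with `F_0! = 1`. -/
def fibFact : ℕ → ℕ
  | 0 => 1
  | n + 1 => Nat.fib (n + 1) * fibFact n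

/-- The fibonomial coefficient `binom(n,k)_F = F_n!/(F_k!·F_{n-k}!)` for `0 ≤ k ≤ n`,
and `0` otherwise. Indices are integers so that negative arguments make sense. -/
def fibBinom (n k : ℤ) : ℕ :=
  if 0 ≤ k ∧ k ≤ n then fibFact n.toNat / (fibFact k.toNat * fibFact (n - k).toNat) else 0

/-!
Writing `C` for `fibBinom`, clearing factorials gives the absorption identities
`F_k C(n,k) = F_n C(n-1,k-1)` and `F_{n-k} C(n,k) = F_n C(n-1,k)`. Splitting
`F_n = F_k F_{n-k+1} + F_{k-1} F_{n-k}` (`Nat.fib_add`), the product `F_n C(n,k) C(n,k-1)` becomes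
`(F_k C(n,k)) (F_{n-k+1} C(n,k-1)) + (F_{n-k} C(n,k)) (F_{k-1} C(n,k-1))`, and each of the four
factors absorbs into `F_n` times a coefficient of row `n - 1`.
-/

open Nat

lemma fibFact_succ (n : ℕ) : fibFact (n + 1) = fib (n + 1) * fibFact n := rfl

lemma fibFact_pos (n : ℕ) : 0 < fibFact n := by
  induction n with
  | zero => exact Nat.one_pos
  | succ n ih => exact Nat.mul_pos (fib_pos.mpr n.succ_pos) ih

lemma fibFact_of_pos {n : ℕ} (hn : 0 < n) : fibFact n = fib n * fibFact (n - 1) := by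
  obtain ⟨m, rfl⟩ := Nat.exists_eq_succ_of_ne_zero hn.ne'
  rfl

lemma fibFact_mul_fibFact_dvd (a b : ℕ) : fibFact a * fibFact b ∣ fibFact (a + b) := by
  induction a generalizing b with
  | zero => simp [fibFact]
  | succ a iha =>
    induction b with
    | zero => simp [fibFact]
    | succ b ihb =>
      -- `F_{a+b+2} = F_a F_{b+1} + F_{a+1} F_{b+2}`; each summand completes one factorial
      rw [show a + 1 + (b + 1) = a + (b + 1) + 1 by omega, fibFact_succ (a + (b + 1)), fib_add,
        add_mul]
      refine dvd_add ?_ ?_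
      · calc fibFact (a + 1) * fibFact (b + 1)
              = fib (b + 1) * (fibFact (a + 1) * fibFact b) := by rw [fibFact_succ b]; ring
          _ ∣ fib (b + 1) * fibFact (a + (b + 1)) := by
              rw [show a + (b + 1) = a + 1 + b by omega]; exact mul_dvd_mul_left _ ihb
          _ ∣ fib a * fib (b + 1) * fibFact (a + (b + 1)) := ⟨fib a, by ring⟩
      · calc fibFact (a + 1) * fibFact (b + 1)
              = fib (a + 1) * (fibFact a * fibFact (b + 1)) := by rw [fibFact_succ a]; ring
          _ ∣ fib (a + 1) * fibFact (a + (b + 1)) := mul_dvd_mul_left _ (iha (b + 1))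
          _ ∣ fib (a + 1) * fib (b + 1 + 1) * fibFact (a + (b + 1)) :=
              ⟨fib (b + 1 + 1), by ring⟩

lemma fibFact_mul_fibFact_mul_fibBinom {n k : ℤ} (hk : 0 ≤ k) (hkn : k ≤ n) :
    fibFact k.toNat * fibFact (n - k).toNat * fibBinom n k = fibFact n.toNat := by
  have hdvd := fibFact_mul_fibFact_dvd k.toNat (n - k).toNat
  rw [show k.toNat + (n - k).toNat = n.toNat by omega] at hdvd
  rw [fibBinom, if_pos ⟨hk, hkn⟩, Nat.mul_div_cancel' hdvd]

lemma fib_mul_fibBinom {n k : ℤ} (hk : 1 ≤ k) (hkn : k ≤ n) :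
    fib k.toNat * fibBinom n k = fib n.toNat * fibBinom (n - 1) (k - 1) := by
  refine Nat.eq_of_mul_eq_mul_left
    (Nat.mul_pos (fibFact_pos (k - 1).toNat) (fibFact_pos (n - k).toNat)) ?_
  calc fibFact (k - 1).toNat * fibFact (n - k).toNat * (fib k.toNat * fibBinom n k)
      = (fib k.toNat * fibFact (k.toNat - 1)) * fibFact (n - k).toNat * fibBinom n k := by
        rw [show (k - 1).toNat = k.toNat - 1 by omega]; ring
    _ = fibFact n.toNat := by
        rw [← fibFact_of_pos (by omega), fibFact_mul_fibFact_mul_fibBinom (by omega) hkn]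
    _ = fib n.toNat * fibFact (n - 1).toNat := by
        rw [fibFact_of_pos (by omega), show (n - 1).toNat = n.toNat - 1 by omega]
    _ = fibFact (k - 1).toNat * fibFact (n - k).toNat *
          (fib n.toNat * fibBinom (n - 1) (k - 1)) := by
        rw [← fibFact_mul_fibFact_mul_fibBinom (n := n - 1) (k := k - 1) (by omega) (by omega),
          show n - 1 - (k - 1) = n - k by ring]
        ring

lemma fib_sub_mul_fibBinom {n k : ℤ} (hk : 0 ≤ k) (hkn : k ≤ n) :
    fib (n - k).toNat * fibBinom n k = fib n.toNat * fibBinom (n - 1) k := by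
  rcases hkn.eq_or_lt with rfl | hkn
  · simp [fibBinom]
  refine Nat.eq_of_mul_eq_mul_left
    (Nat.mul_pos (fibFact_pos k.toNat) (fibFact_pos (n - 1 - k).toNat)) ?_
  calc fibFact k.toNat * fibFact (n - 1 - k).toNat * (fib (n - k).toNat * fibBinom n k)
      = fibFact k.toNat * (fib (n - k).toNat * fibFact ((n - k).toNat - 1)) * fibBinom n k := by
        rw [show (n - 1 - k).toNat = (n - k).toNat - 1 by omega]; ring
    _ = fibFact n.toNat := by
        rw [← fibFact_of_pos (by omega), fibFact_mul_fibFact_mul_fibBinom hk hkn.le]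
    _ = fib n.toNat * fibFact (n - 1).toNat := by
        rw [fibFact_of_pos (by omega), show (n - 1).toNat = n.toNat - 1 by omega]
    _ = fibFact k.toNat * fibFact (n - 1 - k).toNat * (fib n.toNat * fibBinom (n - 1) k) := by
        rw [← fibFact_mul_fibFact_mul_fibBinom (n := n - 1) hk (by omega)]
        ring

lemma fib_toNat_split {n k : ℤ} (hk : 1 ≤ k) (hkn : k ≤ n) :
    fib n.toNat =
      fib k.toNat * fib (n - (k - 1)).toNat + fib (k - 1).toNat * fib (n - k).toNat := by
  have h := fib_add (k - 1).toNat (n - k).toNat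
  rw [show (k - 1).toNat + (n - k).toNat + 1 = n.toNat by omega,
    show (k - 1).toNat + 1 = k.toNat by omega,
    show (n - k).toNat + 1 = (n - (k - 1)).toNat by omega] at h
  rw [h]
  ring

lemma fibBinom_mul_fibBinom_sub_one {n k : ℤ} (hk : 2 ≤ k) (hkn : k ≤ n) :
    fibBinom n k * fibBinom n (k - 1) = fib n.toNat *
      (fibBinom (n - 1) (k - 1) ^ 2 + fibBinom (n - 1) k * fibBinom (n - 1) (k - 2)) := by
  have h₁ := fib_mul_fibBinom (by omega) hkn
  have h₂ := fib_sub_mul_fibBinom (by omega) hkn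
  have h₃ := fib_mul_fibBinom (n := n) (k := k - 1) (by omega) (by omega)
  have h₄ := fib_sub_mul_fibBinom (n := n) (k := k - 1) (by omega) (by omega)
  rw [show k - 1 - 1 = k - 2 by ring] at h₃
  refine Nat.eq_of_mul_eq_mul_left (fib_pos.mpr (by omega : 0 < n.toNat)) ?_
  calc fib n.toNat * (fibBinom n k * fibBinom n (k - 1))
      = fib k.toNat * fibBinom n k * (fib (n - (k - 1)).toNat * fibBinom n (k - 1)) +
          fib (n - k).toNat * fibBinom n k * (fib (k - 1).toNat * fibBinom n (k - 1)) := by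
        rw [fib_toNat_split (by omega) hkn]; ring
    _ = _ := by rw [h₁, h₂, h₃, h₄]; ring

theorem fiboNarayana_recurrence_general (n k : ℤ) (hk : 2 ≤ k) (hkn : k ≤ n) :
    (1 / (Nat.fib n.toNat : ℚ)) * (fibBinom n k : ℚ) * (fibBinom n (k - 1) : ℚ) =
      (fibBinom (n - 1) (k - 1) : ℚ) ^ 2 +
        (fibBinom (n - 1) k : ℚ) * (fibBinom (n - 1) (k - 2) : ℚ) := by
  have hfib : (fib n.toNat : ℚ) ≠ 0 := by exact_mod_cast (fib_pos.mpr (by omega)).ne'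
  have h := congrArg (Nat.cast : ℕ → ℚ) (fibBinom_mul_fibBinom_sub_one hk hkn)
  push_cast at h
  rw [mul_assoc, h]
  field_simp

theorem fiboNarayana_recurrence (n k : ℤ) (hn : 2 ≤ n) (hk : 2 ≤ k) (hkn : k ≤ n) :
    (1 / (Nat.fib n.toNat : ℚ)) * (fibBinom n k : ℚ) * (fibBinom n (k - 1) : ℚ) =
      (fibBinom (n - 1) (k - 1) : ℚ) ^ 2 +
        (fibBinom (n - 1) k : ℚ) * (fibBinom (n - 1) (k - 2) : ℚ) :=
  fiboNarayana_recurrence_general n k hk hkn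
end

section
/- For all n ≥ 1 and 1 ≤ k ≤ n, n divides the product C(n,k)·C(n,k-1) of binomial coefficients, so the Narayana number N_{n,k} = (1/n)·C(n,k)·C(n,k-1) is a positive integer. -/
theorem narayana_pos_int (n k : ℕ) (hn : 1 ≤ n) (hk : 1 ≤ k) (hkn : k ≤ n) :
    n ∣ n.choose k * n.choose (k - 1) ∧ 0 < n.choose k * n.choose (k - 1) / n := by
  set P := n.choose k * n.choose (k - 1) with hP
  obtain ⟨n, rfl⟩ : ∃ m, m + 1 = n := ⟨n - 1, Nat.succ_pred_eq_of_pos hn⟩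
  obtain ⟨k, rfl⟩ : ∃ m, m + 1 = k := ⟨k - 1, Nat.succ_pred_eq_of_pos hk⟩
  have h1 : (n + 1) * n.choose k = (n + 1).choose (k + 1) * (k + 1) :=
    Nat.add_one_mul_choose_eq n k
  have h2 : n.choose k * (n + 1) = (n + 1).choose k * (n + 1 - k) :=
    Nat.choose_mul_succ_eq n k
  have hd1 : (n + 1) ∣ (k + 1) * P := by
    refine ⟨n.choose k * (n + 1).choose k, ?_⟩
    simp only [hP, Nat.add_sub_cancel]
    rw [← mul_assoc, mul_comm (k+1), ← h1]; ring
  have hd2 : (n + 1) ∣ (n + 1 - k) * P := by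
    refine ⟨n.choose k * (n + 1).choose (k + 1), ?_⟩
    simp only [hP, Nat.add_sub_cancel]
    calc (n + 1 - k) * ((n + 1).choose (k + 1) * (n + 1).choose k)
        = (n + 1).choose k * (n + 1 - k) * (n + 1).choose (k + 1) := by ring
      _ = n.choose k * (n + 1) * (n + 1).choose (k + 1) := by rw [h2]
      _ = (n + 1) * (n.choose k * (n + 1).choose (k + 1)) := by ring
  have hsum : (n + 1) ∣ (n + 2) * P := by
    have : (n + 2) * P = (k + 1) * P + (n + 1 - k) * P := by
      have hk' : k ≤ n + 1 := by omega
      rw [← add_mul]; congr 1; omega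
    rw [this]; exact dvd_add hd1 hd2
  have hdvd : (n + 1) ∣ P := by
    have hcop : Nat.Coprime (n + 1) (n + 2) := by
      have h : Nat.gcd (n+1) (n+2) ∣ 1 := by
        simpa using (Nat.dvd_sub (Nat.gcd_dvd_right (n+1) (n+2)) (Nat.gcd_dvd_left (n+1) (n+2)))
      exact Nat.eq_one_of_dvd_one h
    exact (Nat.Coprime.dvd_of_dvd_mul_left hcop hsum)
  have hPpos : 0 < P := by
    apply Nat.mul_pos (Nat.choose_pos hkn) (Nat.choose_pos (by omega))
  exact ⟨hdvd, Nat.div_pos (Nat.le_of_dvd hPpos hdvd) hn⟩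
end
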